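/- arXiv:2107.11693 — 3 statements merged into one kernel-verified Lean document; each statement's English description precedes it below -/
import Mathlib

section
/- In the setting of a normalized 2-cocycle γ on G and a 1-cochain ω₀ on a normal subgroup H whose coboundary equals γ on H × H, for fixed g ∈ G the map Δ_g : H → ℝ defined by Δ_g(h) = ω₀(h) + γ(g,h) + γ(gh,g⁻¹) − ω₀(ghg⁻¹) is a group homomorphism, i.e. Δ_g(h₁h₂) = Δ_g(h₁) + Δ_g(h₂) for all h₁,h₂ ∈ H. -/
/-- For fixed `g`, the map `Δ_g(h) = ω₀(h) + γ(g,h) + γ(gh,g⁻¹) − ω₀(ghg⁻¹)` is additive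
on the normal subgroup `H`. -/
theorem Delta_additive {G : Type*} [Group G] (H : Subgroup G) (hHn : H.Normal)
    (γ : G → G → ℝ)
    (hcoc : ∀ g₁ g₂ g₃ : G, γ g₁ g₂ + γ (g₁ * g₂) g₃ = γ g₂ g₃ + γ g₁ (g₂ * g₃))
    (hnorm : ∀ g : G, γ g g⁻¹ = 0)
    (ω₀ : G → ℝ)
    (hω : ∀ h₁ h₂ : G, h₁ ∈ H → h₂ ∈ H → γ h₁ h₂ = ω₀ (h₁ * h₂) - ω₀ h₁ - ω₀ h₂)
    (g : G) :
    ∀ h₁ h₂ : G, h₁ ∈ H → h₂ ∈ H →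
      (ω₀ (h₁ * h₂) + γ g (h₁ * h₂) + γ (g * (h₁ * h₂)) g⁻¹ - ω₀ (g * (h₁ * h₂) * g⁻¹)) =
      (ω₀ h₁ + γ g h₁ + γ (g * h₁) g⁻¹ - ω₀ (g * h₁ * g⁻¹)) +
      (ω₀ h₂ + γ g h₂ + γ (g * h₂) g⁻¹ - ω₀ (g * h₂ * g⁻¹)) := by
  intro h₁ h₂ hh₁ hh₂
  have hk₁ : g * h₁ * g⁻¹ ∈ H := hHn.conj_mem h₁ hh₁ g
  have hk₂ : g * h₂ * g⁻¹ ∈ H := hHn.conj_mem h₂ hh₂ g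
  have e1 := hω h₁ h₂ hh₁ hh₂
  have e2 := hω _ _ hk₁ hk₂
  have hmul : (g * h₁ * g⁻¹) * (g * h₂ * g⁻¹) = g * (h₁ * h₂) * g⁻¹ := by group
  rw [hmul] at e2
  have c1 := hcoc g h₁ h₂
  have c2 := hcoc (g * h₁) h₂ g⁻¹
  have c3 := hcoc g h₂ g⁻¹
  have c4 := hcoc (g * h₁) g⁻¹ (g * (h₂ * g⁻¹))
  have c5 := hcoc g⁻¹ (g * h₂) g⁻¹
  have c6 := hcoc g⁻¹ g h₂
  have c7 := hcoc 1 1 h₂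
  have n1 : γ g⁻¹ g = 0 := by have := hnorm g⁻¹; rwa [inv_inv] at this
  have n2 : γ (1 : G) (1 : G) = 0 := by have := hnorm (1 : G); rwa [inv_one] at this
  simp only [mul_assoc, inv_mul_cancel_left, mul_inv_cancel_left, inv_mul_cancel,
    mul_one, one_mul] at *
  linarith
end

section
/- If H ⊴ G is perfect (H = [H,H]), γ is a normalized 2-cocycle of G, and ω₀ : H → ℝ satisfies γ(h₁,h₂) = ω₀(h₁h₂) − ω₀(h₁) − ω₀(h₂) on H, then for all g ∈ G and h ∈ H one has ω₀(h) + γ(g,h) + γ(gh,g⁻¹) = ω₀(ghg⁻¹); consequently the image of ι : h ↦ (h,ω₀(h)) is a normal subgroup of the central extension Ĝ = G × ℝ. -/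
/-- The multiplication of the central extension `G × ℝ` twisted by a 2-cocycle `γ`. -/
def twistedMul {G : Type*} [Group G] (γ : G → G → ℝ) (p q : G × ℝ) : G × ℝ :=
  (p.1 * q.1, p.2 + q.2 + γ p.1 q.1)

/-- If `H ⊴ G` is perfect, `γ` a normalized 2-cocycle whose restriction to `H × H` is the
coboundary of `ω₀`, then `ω₀(h) + γ(g,h) + γ(gh,g⁻¹) = ω₀(ghg⁻¹)` for all `g ∈ G`, `h ∈ H`;
consequently the image of `ι : h ↦ (h, ω₀(h))` is normal in the central extension, i.e.
conjugating `(h, ω₀(h))` by any `(g,a)` again lands in the image of `ι`. -/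
theorem iota_image_normal {G : Type*} [Group G] (H : Subgroup G) (hHn : H.Normal)
    (hperf : ⁅H, H⁆ = H)
    (γ : G → G → ℝ)
    (hcoc : ∀ g₁ g₂ g₃ : G, γ g₁ g₂ + γ (g₁ * g₂) g₃ = γ g₂ g₃ + γ g₁ (g₂ * g₃))
    (hnorm : ∀ g : G, γ g g⁻¹ = 0)
    (ω₀ : G → ℝ)
    (hω : ∀ h₁ h₂ : G, h₁ ∈ H → h₂ ∈ H → γ h₁ h₂ = ω₀ (h₁ * h₂) - ω₀ h₁ - ω₀ h₂) :
    (∀ g h : G, h ∈ H → ω₀ h + γ g h + γ (g * h) g⁻¹ = ω₀ (g * h * g⁻¹)) ∧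
    (∀ (g : G) (a : ℝ) (h : G), h ∈ H →
      twistedMul γ (twistedMul γ (g, a) (h, ω₀ h)) (g⁻¹, -a) =
        (g * h * g⁻¹, ω₀ (g * h * g⁻¹))) := by
  -- basic consequences of the cocycle identity and normalization
  have hγ11 : γ 1 1 = 0 := by simpa using hnorm 1
  have hγ1l : ∀ x : G, γ 1 x = 0 := by
    intro x
    have h := hcoc 1 1 x
    simp only [one_mul] at h
    linarith
  have hγ1r : ∀ x : G, γ x 1 = 0 := by
    intro x
    have h := hcoc x 1 1
    simp only [mul_one, one_mul] at h
    linarith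
  have hinv : ∀ x : G, γ x⁻¹ x = 0 := by
    intro x
    simpa using hnorm x⁻¹
  have hω1 : ω₀ 1 = 0 := by
    have h := hω 1 1 H.one_mem H.one_mem
    simp only [one_mul] at h
    linarith [hγ11]
  have part1 : ∀ g h : G, h ∈ H → ω₀ h + γ g h + γ (g * h) g⁻¹ = ω₀ (g * h * g⁻¹) := by
    intro g
    set δ : G → ℝ := fun h => ω₀ h + γ g h + γ (g * h) g⁻¹ - ω₀ (g * h * g⁻¹) with hδ
    have hδ1 : δ 1 = 0 := by
      simp [hδ, hγ1r, hnorm, hω1]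
    have key : ∀ h₁ h₂ : G, h₁ ∈ H → h₂ ∈ H → δ (h₁ * h₂) = δ h₁ + δ h₂ := by
      intro h₁ h₂ m₁ m₂
      have e1 := hcoc g h₁ h₂
      have e2 := hcoc (g * h₁) h₂ g⁻¹
      have e3 := hcoc (g * h₁) g⁻¹ (g * h₂ * g⁻¹)
      have e4 := hcoc g⁻¹ (g * h₂) g⁻¹
      have e5 := hcoc g⁻¹ g h₂
      have hωh := hω h₁ h₂ m₁ m₂
      have hωc := hω (g * h₁ * g⁻¹) (g * h₂ * g⁻¹)
        (hHn.conj_mem h₁ m₁ g) (hHn.conj_mem h₂ m₂ g)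
      have hx : g * h₁ * g⁻¹ * (g * h₂ * g⁻¹) = g * (h₁ * h₂) * g⁻¹ := by group
      rw [hx] at hωc
      simp only [hδ]
      simp only [mul_assoc, inv_mul_cancel_left, inv_mul_cancel, hγ1l, hinv g] at e1 e2 e3 e4 e5 hωh hωc ⊢
      linarith
    have hinvδ : ∀ a : G, a ∈ H → δ a⁻¹ = -δ a := by
      intro a ma
      have h := key a a⁻¹ ma (H.inv_mem ma)
      rw [mul_inv_cancel, hδ1] at h
      linarith
    let K : Subgroup G :=
      { carrier := {h | h ∈ H ∧ δ h = 0}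
        one_mem' := ⟨H.one_mem, hδ1⟩
        mul_mem' := fun {a b} ha hb =>
          ⟨H.mul_mem ha.1 hb.1, by rw [key a b ha.1 hb.1, ha.2, hb.2]; ring⟩
        inv_mem' := fun {a} ha =>
          ⟨H.inv_mem ha.1, by rw [hinvδ a ha.1, ha.2]; ring⟩ }
    have hle : H ≤ K := by
      conv_lhs => rw [← hperf]
      rw [Subgroup.commutator_le]
      intro p hp q hq
      have m1 : p * q ∈ H := H.mul_mem hp hq
      have m2 : p * q * p⁻¹ ∈ H := H.mul_mem m1 (H.inv_mem hp)
      open scoped commutatorElement in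
      have hδc : δ ⁅p, q⁆ = 0 := by
        rw [commutatorElement_def, key _ _ m2 (H.inv_mem hq), key _ _ m1 (H.inv_mem hp),
          key _ _ hp hq, hinvδ p hp, hinvδ q hq]
        ring
      exact ⟨hperf ▸ Subgroup.commutator_mem_commutator hp hq, hδc⟩
    intro h hh
    have := (hle hh).2
    simp only [hδ] at this
    linarith
  refine ⟨part1, ?_⟩
  intro g a h hh
  simp only [twistedMul]
  refine Prod.ext rfl ?_
  have := part1 g h hh
  dsimp only
  linarith
end

section
/- The cyclic sum over j ∈ ℤ/3 of ∫₀^{2π} Î_{[V^{(j)},V^{(j+1)}], V^{(j+2)}} dθ vanishes, where Î_{V,W} = 3v₃w₃' + v₃w₄'' + v₄'w₃' is formed from the boundary values v₃,v₄,w₃,w₄ of the polar components, and the bracket components on the boundary satisfy (V·W)₄|_{r=1} = v₄w₄' − v₄'w₄ and (V·W)₃|_{r=1} = v₄w₃' − w₄v₃'. Consequently β given by integrating I_{V,W} = (v₄'w₄'' − 2v₄w₄') + (3v₃w₃' − v₃'w₄' + v₄'w₃') over [0,2π] is a Lie algebra 2-cocycle on Vect(S¹) ⋉ Vect(S¹)_{ab}.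 -/
open Real
open scoped ContDiff

/-- The `Vect(S¹)` component of the bracket on `Vect(S¹) ⋉ Vect(S¹)_ab`:
`(V·W)₄|_{r=1} = v₄w₄' − v₄'w₄`. -/
noncomputable def brk4 (v4 w4 : ℝ → ℝ) : ℝ → ℝ :=
  fun θ => v4 θ * deriv w4 θ - deriv v4 θ * w4 θ

/-- The abelian component of the bracket on `Vect(S¹) ⋉ Vect(S¹)_ab`:
`(V·W)₃|_{r=1} = v₄w₃' − w₄v₃'`. -/
noncomputable def brk3 (v4 v3 w4 w3 : ℝ → ℝ) : ℝ → ℝ :=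
  fun θ => v4 θ * deriv w3 θ - w4 θ * deriv v3 θ

/-- `Î_{V,W} = 3v₃w₃' + v₃w₄'' + v₄'w₃'`. -/
noncomputable def Ihat (v4 v3 w4 w3 : ℝ → ℝ) : ℝ → ℝ :=
  fun θ => 3 * v3 θ * deriv w3 θ + v3 θ * deriv (deriv w4) θ + deriv v4 θ * deriv w3 θ

/-- `I_{V,W} = (v₄'w₄'' − 2v₄w₄') + (3v₃w₃' − v₃'w₄' + v₄'w₃')`. -/
noncomputable def Ifull (v4 v3 w4 w3 : ℝ → ℝ) : ℝ → ℝ :=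
  fun θ => (deriv v4 θ * deriv (deriv w4) θ - 2 * v4 θ * deriv w4 θ)
    + (3 * v3 θ * deriv w3 θ - deriv v3 θ * deriv w4 θ + deriv v4 θ * deriv w3 θ)

/- Auxiliary lemmas -/

lemma smooth_deriv {f : ℝ → ℝ} (hf : ContDiff ℝ ∞ f) : ContDiff ℝ ∞ (deriv f) :=
  (contDiff_infty_iff_deriv.mp hf).2

lemma hasDerivAt_of_smooth {f : ℝ → ℝ} (hf : ContDiff ℝ ∞ f) (x : ℝ) :
    HasDerivAt f (deriv f x) x :=
  ((contDiff_infty_iff_deriv.mp hf).1 x).hasDerivAt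

lemma periodic_deriv' {f : ℝ → ℝ} {c : ℝ} (hf : Function.Periodic f c) :
    Function.Periodic (deriv f) c := fun x => by
  have h1 : (fun y => f (y + c)) = f := funext hf
  rw [← deriv_comp_add_const, h1]

lemma brk4_hasDerivAt {f g : ℝ → ℝ} (hf : ContDiff ℝ ∞ f) (hg : ContDiff ℝ ∞ g) (x : ℝ) :
    HasDerivAt (brk4 f g)
      (f x * deriv (deriv g) x - deriv (deriv f) x * g x) x := by
  have h := ((hasDerivAt_of_smooth hf x).mul
      (hasDerivAt_of_smooth (smooth_deriv hg) x)).sub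
    ((hasDerivAt_of_smooth (smooth_deriv hf) x).mul (hasDerivAt_of_smooth hg x))
  refine h.congr_deriv ?_
  ring

lemma brk3_hasDerivAt {f u g w : ℝ → ℝ} (hf : ContDiff ℝ ∞ f) (hu : ContDiff ℝ ∞ u)
    (hg : ContDiff ℝ ∞ g) (hw : ContDiff ℝ ∞ w) (x : ℝ) :
    HasDerivAt (brk3 f u g w)
      (deriv f x * deriv w x + f x * deriv (deriv w) x
        - deriv g x * deriv u x - g x * deriv (deriv u) x) x := by
  have h := ((hasDerivAt_of_smooth hf x).mul
      (hasDerivAt_of_smooth (smooth_deriv hw) x)).sub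
    ((hasDerivAt_of_smooth hg x).mul (hasDerivAt_of_smooth (smooth_deriv hu) x))
  refine h.congr_deriv ?_
  ring

lemma contDiff_brk4 {f g : ℝ → ℝ} (hf : ContDiff ℝ ∞ f) (hg : ContDiff ℝ ∞ g) :
    ContDiff ℝ ∞ (brk4 f g) :=
  (hf.mul (smooth_deriv hg)).sub ((smooth_deriv hf).mul hg)

lemma contDiff_brk3 {f u g w : ℝ → ℝ} (hf : ContDiff ℝ ∞ f) (hu : ContDiff ℝ ∞ u)
    (hg : ContDiff ℝ ∞ g) (hw : ContDiff ℝ ∞ w) : ContDiff ℝ ∞ (brk3 f u g w) :=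
  (hf.mul (smooth_deriv hw)).sub (hg.mul (smooth_deriv hu))

lemma continuous_Ihat {a b c d : ℝ → ℝ} (ha : ContDiff ℝ ∞ a) (hb : ContDiff ℝ ∞ b)
    (hc : ContDiff ℝ ∞ c) (hd : ContDiff ℝ ∞ d) : Continuous (Ihat a b c d) := by
  unfold Ihat
  exact (((continuous_const.mul hb.continuous).mul (smooth_deriv hd).continuous).add
    (hb.continuous.mul (smooth_deriv (smooth_deriv hc)).continuous)).add
    ((smooth_deriv ha).continuous.mul (smooth_deriv hd).continuous)

lemma continuous_Ifull {a b c d : ℝ → ℝ} (ha : ContDiff ℝ ∞ a) (hb : ContDiff ℝ ∞ b)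
    (hc : ContDiff ℝ ∞ c) (hd : ContDiff ℝ ∞ d) : Continuous (Ifull a b c d) := by
  unfold Ifull
  exact (((smooth_deriv ha).continuous.mul
      (smooth_deriv (smooth_deriv hc)).continuous).sub
      ((continuous_const.mul ha.continuous).mul (smooth_deriv hc).continuous)).add
    ((((continuous_const.mul hb.continuous).mul (smooth_deriv hd).continuous).sub
      ((smooth_deriv hb).continuous.mul (smooth_deriv hc).continuous)).add
      ((smooth_deriv ha).continuous.mul (smooth_deriv hd).continuous))

lemma sum_zmod3 {M : Type*} [AddCommMonoid M] (F : ZMod 3 → M) :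
    ∑ j : ZMod 3, F j = F 0 + F 1 + F 2 := by
  show ∑ j : Fin 3, F j = _
  exact Fin.sum_univ_three F

/-- The cyclic sum over `j ∈ ℤ/3` of `∫₀^{2π} Î_{[V⁽ʲ⁾,V⁽ʲ⁺¹⁾], V⁽ʲ⁺²⁾} dθ` vanishes for
smooth `2π`-periodic data; consequently `β` obtained by integrating `I_{V,W}` over
`[0,2π]` satisfies the Lie algebra 2-cocycle identity on `Vect(S¹) ⋉ Vect(S¹)_ab`. -/
theorem cyclic_sum_vanishes (v4 v3 : ZMod 3 → ℝ → ℝ)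
    (h4 : ∀ j, ContDiff ℝ (⊤ : ℕ∞) (v4 j)) (h3 : ∀ j, ContDiff ℝ (⊤ : ℕ∞) (v3 j))
    (h4p : ∀ j, Function.Periodic (v4 j) (2 * π))
    (h3p : ∀ j, Function.Periodic (v3 j) (2 * π)) :
    (∑ j : ZMod 3, ∫ θ in (0:ℝ)..(2 * π),
      Ihat (brk4 (v4 j) (v4 (j + 1))) (brk3 (v4 j) (v3 j) (v4 (j + 1)) (v3 (j + 1)))
        (v4 (j + 2)) (v3 (j + 2)) θ) = 0 ∧
    (∑ j : ZMod 3, ∫ θ in (0:ℝ)..(2 * π),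
      Ifull (brk4 (v4 j) (v4 (j + 1))) (brk3 (v4 j) (v3 j) (v4 (j + 1)) (v3 (j + 1)))
        (v4 (j + 2)) (v3 (j + 2)) θ) = 0 := by
  have h4' : ∀ j, ContDiff ℝ ∞ (v4 j) := fun j => (h4 j).of_le (by simp)
  have h3' : ∀ j, ContDiff ℝ ∞ (v3 j) := fun j => (h3 j).of_le (by simp)
  -- pointwise identity for the Ihat cyclic sum
  have key1 : ∀ θ : ℝ, (∑ j : ZMod 3,
      Ihat (brk4 (v4 j) (v4 (j + 1))) (brk3 (v4 j) (v3 j) (v4 (j + 1)) (v3 (j + 1)))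
        (v4 (j + 2)) (v3 (j + 2)) θ) = 0 := by
    intro θ
    rw [sum_zmod3]
    simp only [show ((0:ZMod 3)+1) = 1 from rfl, show ((0:ZMod 3)+2) = 2 from rfl,
      show ((1:ZMod 3)+1) = 2 from rfl, show ((1:ZMod 3)+2) = 0 from rfl,
      show ((2:ZMod 3)+1) = 0 from rfl, show ((2:ZMod 3)+2) = 1 from rfl]
    simp only [Ihat, brk3]
    rw [(brk4_hasDerivAt (h4' 0) (h4' 1) θ).deriv,
      (brk4_hasDerivAt (h4' 1) (h4' 2) θ).deriv,
      (brk4_hasDerivAt (h4' 2) (h4' 0) θ).deriv]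
    ring
  -- the primitive for the Ifull cyclic sum
  set F : ℝ → ℝ := fun θ =>
    brk4 (v4 0) (v4 1) θ * deriv (v3 2) θ + brk4 (v4 1) (v4 2) θ * deriv (v3 0) θ
      + brk4 (v4 2) (v4 0) θ * deriv (v3 1) θ with hFdef
  have hF : ∀ θ : ℝ, HasDerivAt F (∑ j : ZMod 3,
      Ifull (brk4 (v4 j) (v4 (j + 1))) (brk3 (v4 j) (v3 j) (v4 (j + 1)) (v3 (j + 1)))
        (v4 (j + 2)) (v3 (j + 2)) θ) θ := by
    intro θ
    have h := (((brk4_hasDerivAt (h4' 0) (h4' 1) θ).mul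
        (hasDerivAt_of_smooth (smooth_deriv (h3' 2)) θ)).add
      ((brk4_hasDerivAt (h4' 1) (h4' 2) θ).mul
        (hasDerivAt_of_smooth (smooth_deriv (h3' 0)) θ))).add
      ((brk4_hasDerivAt (h4' 2) (h4' 0) θ).mul
        (hasDerivAt_of_smooth (smooth_deriv (h3' 1)) θ))
    refine h.congr_deriv ?_
    rw [sum_zmod3]
    simp only [show ((0:ZMod 3)+1) = 1 from rfl, show ((0:ZMod 3)+2) = 2 from rfl,
      show ((1:ZMod 3)+1) = 2 from rfl, show ((1:ZMod 3)+2) = 0 from rfl,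
      show ((2:ZMod 3)+1) = 0 from rfl, show ((2:ZMod 3)+2) = 1 from rfl]
    simp only [Ifull, brk4, brk3]
    rw [(brk3_hasDerivAt (h4' 0) (h3' 0) (h4' 1) (h3' 1) θ).deriv,
      (brk3_hasDerivAt (h4' 1) (h3' 1) (h4' 2) (h3' 2) θ).deriv,
      (brk3_hasDerivAt (h4' 2) (h3' 2) (h4' 0) (h3' 0) θ).deriv,
      (brk4_hasDerivAt (h4' 0) (h4' 1) θ).deriv,
      (brk4_hasDerivAt (h4' 1) (h4' 2) θ).deriv,
      (brk4_hasDerivAt (h4' 2) (h4' 0) θ).deriv]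
    ring
  constructor
  · -- Ihat part
    rw [← intervalIntegral.integral_finset_sum (fun j _ =>
      (continuous_Ihat (contDiff_brk4 (h4' j) (h4' (j+1)))
        (contDiff_brk3 (h4' j) (h3' j) (h4' (j+1)) (h3' (j+1)))
        (h4' (j+2)) (h3' (j+2))).intervalIntegrable 0 (2*π))]
    simp only [key1, intervalIntegral.integral_zero]
  · -- Ifull part
    have hcont : Continuous fun θ => ∑ j : ZMod 3,
        Ifull (brk4 (v4 j) (v4 (j + 1))) (brk3 (v4 j) (v3 j) (v4 (j + 1)) (v3 (j + 1)))
          (v4 (j + 2)) (v3 (j + 2)) θ :=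
      continuous_finset_sum _ (fun j _ =>
        continuous_Ifull (contDiff_brk4 (h4' j) (h4' (j+1)))
          (contDiff_brk3 (h4' j) (h3' j) (h4' (j+1)) (h3' (j+1)))
          (h4' (j+2)) (h3' (j+2)))
    rw [← intervalIntegral.integral_finset_sum (fun j _ =>
      (continuous_Ifull (contDiff_brk4 (h4' j) (h4' (j+1)))
        (contDiff_brk3 (h4' j) (h3' j) (h4' (j+1)) (h3' (j+1)))
        (h4' (j+2)) (h3' (j+2))).intervalIntegrable 0 (2*π))]
    rw [intervalIntegral.integral_eq_sub_of_hasDerivAt (fun t _ => hF t)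
      (hcont.intervalIntegrable 0 (2*π))]
    have hFper : Function.Periodic F (2 * π) := by
      intro x
      simp only [hFdef, brk4]
      rw [h4p 0, h4p 1, h4p 2, periodic_deriv' (h4p 0), periodic_deriv' (h4p 1),
        periodic_deriv' (h4p 2), periodic_deriv' (h3p 0), periodic_deriv' (h3p 1),
        periodic_deriv' (h3p 2)]
    have : F (2 * π) = F 0 := by
      have := hFper 0
      simpa using this
    rw [this, sub_self]
end
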